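/- For every k ≥ 0: Σ_{n=0}^{k} (−1)^n · v^{−n(n+3)/2} · {k+n}_{2n}/{n}! = v^{−2k(k+1)}, where {i} = v^i − v^{−i}, {a}_{2n} = {a}{a−1}⋯{a−2n+1}, {n}! = {n}⋯{1}. -/

import Mathlib

/-!
Wilf–Zeilberger telescoping. Let `F k n` be the `n`-th summand, `a = v^(k+1)`, and
`G k 0 = 0`, `G k (n+1) = (a³ + a) (-1)^n v^(-n(n+1)/2) {k+n+1}_(2n+1) / {n}!`. Then
`a⁴ F (k+1) n - F k n = G k (n+1) - G k n`, which after the common factor is cancelled is a Laurent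
polynomial identity in `a` and `b = v^(n+1)`. Both `F k n` and `G k (n+1)` vanish for `n > k`,
since their falling products then pass through `{0}`; so summing over `n` gives
`a⁴ S(k+1) = S(k)` for `S(k) = ∑ₙ F k n`, and `S(0) = 1`.
-/

/-- `v`, an indeterminate, as an element of the field `ℚ(v)` of rational functions. -/
noncomputable def vv : RatFunc ℚ := RatFunc.X

/-- The balanced `q`-integer `{m} = v^m - v^{-m}`. -/
noncomputable def bk (m : ℤ) : RatFunc ℚ := vv ^ m - vv ^ (-m)

/-- The falling product `{a}_i = {a}{a-1}⋯{a-i+1}`. -/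
noncomputable def bkp (a : ℤ) (i : ℕ) : RatFunc ℚ := ∏ j ∈ Finset.range i, bk (a - j)

/-- The balanced factorial `{n}! = {n}{n-1}⋯{1}`. -/
noncomputable def bfact (n : ℕ) : RatFunc ℚ := bkp n n

/-- The balanced binomial coefficient `[a choose b] = {a}_b / {b}!`. -/
noncomputable def bbinom (a : ℤ) (b : ℕ) : RatFunc ℚ := bkp a b / bfact b

/-- Chebyshev-type polynomials `V_0 = 1`, `V_1 = x`, `V_n = x V_{n-1} - V_{n-2}`. -/
noncomputable def chebV : ℕ → Polynomial (RatFunc ℚ)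
  | 0 => 1
  | 1 => Polynomial.X
  | (n + 2) => Polynomial.X * chebV (n + 1) - chebV n

/-- `P_n = ∏_{i=0}^{n-1} (x - v^{2i+1} - v^{-2i-1})`. -/
noncomputable def PP (n : ℕ) : Polynomial (RatFunc ℚ) :=
  ∏ i ∈ Finset.range n,
    (Polynomial.X - Polynomial.C (vv ^ (2 * i + 1) + vv ^ (-(2 * (i : ℤ) + 1))))

lemma vv_ne_zero : vv ≠ 0 := RatFunc.X_ne_zero

lemma intDegree_vv_zpow (m : ℤ) : (vv ^ m).intDegree = m := by
  induction m using Int.induction_on with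
  | zero => simp
  | succ i ih =>
    rw [zpow_add_one₀ vv_ne_zero, RatFunc.intDegree_mul (zpow_ne_zero _ vv_ne_zero) vv_ne_zero, ih,
      vv, RatFunc.intDegree_X]
  | pred i ih =>
    rw [zpow_sub_one₀ vv_ne_zero, RatFunc.intDegree_mul (zpow_ne_zero _ vv_ne_zero)
      (inv_ne_zero vv_ne_zero), ih, RatFunc.intDegree_inv, vv, RatFunc.intDegree_X]
    ring

lemma bk_ne_zero {m : ℤ} (hm : m ≠ 0) : bk m ≠ 0 := by
  intro h
  have := congrArg RatFunc.intDegree (sub_eq_zero.mp h)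
  rw [intDegree_vv_zpow, intDegree_vv_zpow] at this
  omega

lemma bk_zero : bk 0 = 0 := by simp [bk]

lemma bk_natCast (m : ℕ) : bk m = vv ^ m - (vv ^ m)⁻¹ := by
  rw [bk, zpow_neg, zpow_natCast]

lemma bk_natCast_add (p q : ℕ) : bk ((p : ℤ) + q) = vv ^ p * vv ^ q - (vv ^ p * vv ^ q)⁻¹ := by
  rw [← Nat.cast_add, bk_natCast, pow_add]

lemma bk_natCast_sub (p q : ℕ) : bk ((p : ℤ) - q) = vv ^ p / vv ^ q - (vv ^ p / vv ^ q)⁻¹ := by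
  rw [bk, zpow_neg, zpow_sub₀ vv_ne_zero, zpow_natCast, zpow_natCast]

lemma bkp_succ (a : ℤ) (i : ℕ) : bkp a (i + 1) = bkp a i * bk (a - i) :=
  Finset.prod_range_succ _ _

lemma bkp_succ' (a : ℤ) (i : ℕ) : bkp (a + 1) (i + 1) = bk (a + 1) * bkp a i := by
  rw [bkp, Finset.prod_range_succ', mul_comm]
  congr 1
  · simp
  · refine Finset.prod_congr rfl fun j _ => ?_
    congr 1
    push_cast
    ring

lemma bkp_eq_zero {a : ℤ} {i : ℕ} (ha : 0 ≤ a) (hi : a < i) : bkp a i = 0 :=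
  Finset.prod_eq_zero (i := a.toNat) (by simp only [Finset.mem_range]; omega)
    (by rw [Int.toNat_of_nonneg ha, sub_self, bk_zero])

lemma bfact_succ (n : ℕ) : bfact (n + 1) = bk (n + 1) * bfact n := by
  rw [bfact, bfact, Nat.cast_succ, bkp_succ']

noncomputable def wzTerm (k n : ℕ) : RatFunc ℚ :=
  (-1) ^ n * (vv ^ (n * (n + 3) / 2))⁻¹ * (bkp ((k : ℤ) + n) (2 * n) / bfact n)

noncomputable def oddTerm (k n : ℕ) : RatFunc ℚ :=
  (-1) ^ n * (vv ^ (n * (n + 1) / 2))⁻¹ * (bkp ((k : ℤ) + n + 1) (2 * n + 1) / bfact n)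

noncomputable def wzCert (k : ℕ) : ℕ → RatFunc ℚ
  | 0 => 0
  | n + 1 => ((vv ^ (k + 1)) ^ 3 + vv ^ (k + 1)) * oddTerm k n

lemma wzTerm_zero_right (k : ℕ) : wzTerm k 0 = 1 := by
  simp [wzTerm, bkp, bfact]

lemma oddTerm_zero_right (k : ℕ) : oddTerm k 0 = bk ((k : ℤ) + 1) := by
  simp [oddTerm, bkp, bfact]

lemma pow_succ_mul_succ_add_three_div_two {M : Type*} [Monoid M] (x : M) (n : ℕ) :
    x ^ ((n + 1) * (n + 1 + 3) / 2) = x ^ (n * (n + 1) / 2) * (x ^ (n + 1)) ^ 2 := by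
  rw [← pow_mul, ← pow_add, show (n + 1) * (n + 1 + 3) = n * (n + 1) + (n + 1) * 2 * 2 by ring,
    Nat.add_mul_div_right _ _ two_pos]

lemma pow_succ_mul_succ_add_one_div_two {M : Type*} [Monoid M] (x : M) (n : ℕ) :
    x ^ ((n + 1) * (n + 1 + 1) / 2) = x ^ (n * (n + 1) / 2) * x ^ (n + 1) := by
  rw [← pow_add, show (n + 1) * (n + 1 + 1) = n * (n + 1) + (n + 1) * 2 by ring,
    Nat.add_mul_div_right _ _ two_pos]

lemma wzTerm_succ_succ (k n : ℕ) :
    wzTerm (k + 1) (n + 1) =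
      -oddTerm k n * ((vv ^ (n + 1)) ^ 2)⁻¹ * bk ((k : ℤ) + n + 2) / bk (n + 1) := by
  rw [wzTerm, oddTerm, pow_succ_mul_succ_add_three_div_two, bfact_succ,
    show ((k + 1 : ℕ) : ℤ) + (n + 1 : ℕ) = (k : ℤ) + n + 1 + 1 by push_cast; ring,
    show 2 * (n + 1) = 2 * n + 1 + 1 by ring, bkp_succ']
  ring_nf

lemma wzTerm_succ_right (k n : ℕ) :
    wzTerm k (n + 1) = -oddTerm k n * ((vv ^ (n + 1)) ^ 2)⁻¹ * bk ((k : ℤ) - n) / bk (n + 1) := by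
  rw [wzTerm, oddTerm, pow_succ_mul_succ_add_three_div_two, bfact_succ,
    show (k : ℤ) + (n + 1 : ℕ) = k + n + 1 by push_cast; ring,
    show 2 * (n + 1) = 2 * n + 1 + 1 by ring, bkp_succ,
    show (k : ℤ) + n + 1 - (2 * n + 1 : ℕ) = k - n by push_cast; ring]
  ring

lemma oddTerm_succ_right (k n : ℕ) :
    oddTerm k (n + 1) =
      -oddTerm k n * (vv ^ (n + 1))⁻¹ * (bk ((k : ℤ) + n + 2) * bk ((k : ℤ) - n)) / bk (n + 1) := by
  rw [oddTerm, oddTerm, pow_succ_mul_succ_add_one_div_two, bfact_succ,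
    show 2 * (n + 1) + 1 = 2 * n + 1 + 1 + 1 by ring,
    show (k : ℤ) + (n + 1 : ℕ) + 1 = (k : ℤ) + n + 1 + 1 by push_cast; ring, bkp_succ', bkp_succ,
    show (k : ℤ) + n + 1 - (2 * n + 1 : ℕ) = k - n by push_cast; ring]
  ring_nf

lemma pow_mul_wzTerm_succ_sub_wzTerm (k n : ℕ) :
    (vv ^ (k + 1)) ^ 4 * wzTerm (k + 1) n - wzTerm k n = wzCert k (n + 1) - wzCert k n := by
  have hA : vv ^ (k + 1) ≠ 0 := pow_ne_zero _ vv_ne_zero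
  cases n with
  | zero =>
    rw [wzTerm_zero_right, wzTerm_zero_right, wzCert, wzCert, oddTerm_zero_right,
      ← Nat.cast_add_one, bk_natCast]
    field_simp
    ring
  | succ n =>
    rw [wzTerm_succ_succ, wzTerm_succ_right, wzCert, wzCert, oddTerm_succ_right,
      show (k : ℤ) + n + 2 = (k + 1 : ℕ) + (n + 1 : ℕ) by push_cast; ring, bk_natCast_add,
      show (k : ℤ) - n = (k + 1 : ℕ) - (n + 1 : ℕ) by push_cast; ring, bk_natCast_sub,
      ← Nat.cast_add_one, bk_natCast]
    have hB : vv ^ (n + 1) ≠ 0 := pow_ne_zero _ vv_ne_zero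
    have hB2 : (vv ^ (n + 1)) ^ 2 - 1 ≠ 0 := by
      have := bk_ne_zero (m := ((n + 1 : ℕ) : ℤ)) (by omega)
      rw [bk_natCast] at this
      contrapose! this
      field_simp
      linear_combination this
    generalize vv ^ (k + 1) = a at *
    generalize vv ^ (n + 1) = b at *
    field_simp
    ring

lemma wzTerm_eq_zero_of_lt {k n : ℕ} (h : k < n) : wzTerm k n = 0 := by
  rw [wzTerm, bkp_eq_zero (by positivity) (by push_cast; omega), zero_div, mul_zero]

lemma oddTerm_eq_zero_of_lt {k n : ℕ} (h : k < n) : oddTerm k n = 0 := by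
  rw [oddTerm, bkp_eq_zero (by positivity) (by push_cast; omega), zero_div, mul_zero]

lemma pow_mul_sum_wzTerm_succ (k : ℕ) :
    (vv ^ (k + 1)) ^ 4 * ∑ n ∈ Finset.range (k + 2), wzTerm (k + 1) n =
      ∑ n ∈ Finset.range (k + 1), wzTerm k n := by
  have htel := Finset.sum_range_sub (wzCert k) (k + 2)
  have hcert : wzCert k (k + 2) = 0 := by
    rw [wzCert, oddTerm_eq_zero_of_lt k.lt_succ_self, mul_zero]
  simp only [← pow_mul_wzTerm_succ_sub_wzTerm] at htel
  rwa [Finset.sum_sub_distrib, ← Finset.mul_sum, Finset.sum_range_succ (wzTerm k),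
    wzTerm_eq_zero_of_lt k.lt_succ_self, add_zero, hcert, wzCert, sub_zero, sub_eq_zero] at htel

theorem stmt10 (k : ℕ) :
    ∑ n ∈ Finset.range (k + 1),
        (-1 : RatFunc ℚ) ^ n * (vv ^ (n * (n + 3) / 2))⁻¹ *
          (bkp ((k : ℤ) + n) (2 * n) / bfact n) =
      (vv ^ (2 * k * (k + 1)))⁻¹ := by
  change ∑ n ∈ Finset.range (k + 1), wzTerm k n = _
  induction k with
  | zero => simp [wzTerm_zero_right]
  | succ k ih =>
    have hA : (vv ^ (k + 1)) ^ 4 ≠ 0 := pow_ne_zero _ (pow_ne_zero _ vv_ne_zero)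
    calc ∑ n ∈ Finset.range (k + 2), wzTerm (k + 1) n
        = ((vv ^ (k + 1)) ^ 4)⁻¹ * ∑ n ∈ Finset.range (k + 1), wzTerm k n := by
          rw [← pow_mul_sum_wzTerm_succ k, inv_mul_cancel_left₀ hA]
      _ = (vv ^ (2 * (k + 1) * (k + 1 + 1)))⁻¹ := by
          rw [ih, ← mul_inv, ← pow_mul, ← pow_add]
          ring_nf
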